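/- Under the functional representation (X = x(X′,Q), W = w(W′,Q) with X′, W′, Q mutually independent), the mutual informations satisfy I(X′; Y, Q, W′) = I(X; Y, W | Q), I(W′; Y, Q, X′) = I(W; Y, X | Q), and I(X′, W′; Y, Q) = I(X, W; Y | Q). -/
import Mathlib


open scoped Classical
noncomputable section

/-- Probability that the random variable `X` takes the value `a`, under the pmf `p`
on a finite sample space. -/
def pr {Ω α : Type*} [Fintype Ω] (p : Ω → ℝ) (X : Ω → α) (a : α) : ℝ :=
  ∑ ω, if X ω = a then p ω else 0

/-- Shannon entropy (in bits) of the random variable `X` under the pmf `p`. -/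
def ent {Ω α : Type*} [Fintype Ω] [Fintype α] (p : Ω → ℝ) (X : Ω → α) : ℝ :=
  -∑ a, pr p X a * Real.logb 2 (pr p X a)

/-- Mutual information `I(A; B)` (in bits). -/
def mi {Ω α β : Type*} [Fintype Ω] [Fintype α] [Fintype β]
    (p : Ω → ℝ) (A : Ω → α) (B : Ω → β) : ℝ :=
  ent p A + ent p B - ent p (fun ω => (A ω, B ω))

/-- Conditional mutual information `I(A; B | C)` (in bits). -/
def condMI {Ω α β γ : Type*} [Fintype Ω] [Fintype α] [Fintype β] [Fintype γ]
    (p : Ω → ℝ) (A : Ω → α) (B : Ω → β) (C : Ω → γ) : ℝ :=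
  ent p (fun ω => (A ω, C ω)) + ent p (fun ω => (B ω, C ω))
    - ent p (fun ω => (A ω, B ω, C ω)) - ent p C

/-! ### Auxiliary lemmas on `pr` and `ent` -/

lemma pr_nonneg {Ω α : Type*} [Fintype Ω] (p : Ω → ℝ) (hp0 : ∀ ω, 0 ≤ p ω) (X : Ω → α) (a : α) :
    0 ≤ pr p X a :=
  Finset.sum_nonneg fun ω _ => by split <;> simp [hp0 ω]

lemma pr_sum {Ω α : Type*} [Fintype Ω] [Fintype α] (p : Ω → ℝ) (X : Ω → α) :
    ∑ a, pr p X a = ∑ ω, p ω := by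
  unfold pr; rw [Finset.sum_comm]
  exact Finset.sum_congr rfl fun ω _ => by simp

lemma pr_comp {Ω α β : Type*} [Fintype Ω] [Fintype α] (p : Ω → ℝ) (A : Ω → α) (f : α → β) (b : β) :
    pr p (fun ω => f (A ω)) b = ∑ a, if f a = b then pr p A a else 0 := by
  unfold pr
  symm
  calc ∑ a, (if f a = b then ∑ ω, if A ω = a then p ω else 0 else 0)
      = ∑ a, ∑ ω, (if f a = b then if A ω = a then p ω else 0 else 0) := by
        refine Finset.sum_congr rfl fun a _ => ?_; split <;> simp
    _ = ∑ ω, ∑ a, (if f a = b then if A ω = a then p ω else 0 else 0) := Finset.sum_comm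
    _ = ∑ ω, if f (A ω) = b then p ω else 0 := by
        refine Finset.sum_congr rfl fun ω _ => ?_
        have : ∀ a, (if f a = b then if A ω = a then p ω else 0 else 0)
            = if a = A ω then (if f (A ω) = b then p ω else 0) else 0 := by
          intro a
          by_cases h : a = A ω
          · subst h; simp [eq_comm]
          · simp only [h, if_false]
            split
            · rw [if_neg (fun hh : A ω = a => h hh.symm)]
            · rfl
        simp only [this, Finset.sum_ite_eq' Finset.univ, Finset.mem_univ, if_true]

lemma pr_fst {Ω α β : Type*} [Fintype Ω] [Fintype β] (p : Ω → ℝ) (A : Ω → α) (B : Ω → β) (a : α) :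
    ∑ b, pr p (fun ω => (A ω, B ω)) (a, b) = pr p A a := by
  unfold pr
  rw [Finset.sum_comm]
  refine Finset.sum_congr rfl fun ω _ => ?_
  simp [Prod.ext_iff, ite_and]

lemma pr_comp_inj_apply {Ω α β : Type*} [Fintype Ω] (p : Ω → ℝ) (A : Ω → α) (f : α → β)
    (hf : Function.Injective f) (a : α) :
    pr p (fun ω => f (A ω)) (f a) = pr p A a := by
  unfold pr
  exact Finset.sum_congr rfl fun ω _ => by simp [hf.eq_iff]

lemma ent_comp_inj {Ω α β : Type*} [Fintype Ω] [Fintype α] [Fintype β] (p : Ω → ℝ)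
    (A : Ω → α) (f : α → β) (hf : Function.Injective f) :
    ent p (fun ω => f (A ω)) = ent p A := by
  unfold ent
  congr 1
  have himg : ∑ b ∈ Finset.univ.image f,
      (pr p (fun ω => f (A ω)) b * Real.logb 2 (pr p (fun ω => f (A ω)) b))
      = ∑ a, (pr p (fun ω => f (A ω)) (f a) * Real.logb 2 (pr p (fun ω => f (A ω)) (f a))) :=
    Finset.sum_image (fun x _ y _ hxy => hf hxy)
  rw [← Finset.sum_subset (Finset.subset_univ (Finset.univ.image f)) (fun b _ hb => ?_), himg]
  · exact Finset.sum_congr rfl fun a _ => by rw [pr_comp_inj_apply p A f hf]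
  · have : pr p (fun ω => f (A ω)) b = 0 := by
      rw [pr_comp]
      refine Finset.sum_eq_zero fun a _ => ?_
      have : f a ≠ b := fun h => hb (by simpa [h] using Finset.mem_image_of_mem f (Finset.mem_univ a))
      simp [this]
    simp [this]

lemma pr_swap {Ω α β : Type*} [Fintype Ω] (p : Ω → ℝ) (A : Ω → α) (B : Ω → β) (a : α) (b : β) :
    pr p (fun ω => (B ω, A ω)) (b, a) = pr p (fun ω => (A ω, B ω)) (a, b) := by
  unfold pr
  refine Finset.sum_congr rfl fun ω _ => ?_
  simp only [Prod.mk.injEq]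
  by_cases h1 : A ω = a <;> by_cases h2 : B ω = b <;> simp [h1, h2]

lemma ent_pair_kernel {Ω β γ : Type*} [Fintype Ω] [Fintype β] [Fintype γ]
    (p : Ω → ℝ) (hp0 : ∀ ω, 0 ≤ p ω) (C : Ω → γ) (Yv : Ω → β) (K : γ → β → ℝ)
    (hK : ∀ c y, pr p (fun ω => (C ω, Yv ω)) (c, y) = pr p C c * K c y) :
    ent p (fun ω => (Yv ω, C ω))
      = ent p C - ∑ c, ∑ y, pr p C c * (K c y * Real.logb 2 (K c y)) := by
  have hrow : ∀ c, pr p C c ≠ 0 → ∑ y, K c y = 1 := by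
    intro c hc
    have h1 : ∑ y, pr p (fun ω => (C ω, Yv ω)) (c, y) = pr p C c := pr_fst p C Yv c
    rw [Finset.sum_congr rfl fun y _ => hK c y, ← Finset.mul_sum] at h1
    field_simp at h1
    tauto
  have key : ∀ c, ∑ y, (pr p C c * K c y) * Real.logb 2 (pr p C c * K c y)
      = pr p C c * Real.logb 2 (pr p C c) + ∑ y, pr p C c * (K c y * Real.logb 2 (K c y)) := by
    intro c
    by_cases hc : pr p C c = 0
    · simp [hc]
    · have hcpos : 0 < pr p C c := lt_of_le_of_ne (pr_nonneg p hp0 C c) (Ne.symm hc)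
      have step : ∀ y, (pr p C c * K c y) * Real.logb 2 (pr p C c * K c y)
          = (pr p C c * Real.logb 2 (pr p C c)) * K c y
            + pr p C c * (K c y * Real.logb 2 (K c y)) := by
        intro y
        by_cases hy : K c y = 0
        · simp [hy]
        · rw [Real.logb_mul hc hy]; ring
      rw [Finset.sum_congr rfl fun y _ => step y, Finset.sum_add_distrib, ← Finset.mul_sum,
        hrow c hc, mul_one]
  have hent : ent p (fun ω => (Yv ω, C ω))
      = -∑ c, ∑ y, (pr p C c * K c y) * Real.logb 2 (pr p C c * K c y) := by
    unfold ent
    congr 1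
    rw [Fintype.sum_prod_type, Finset.sum_comm]
    refine Finset.sum_congr rfl fun c _ => Finset.sum_congr rfl fun y _ => ?_
    rw [pr_swap, hK]
  rw [hent, Finset.sum_congr rfl fun c _ => key c, Finset.sum_add_distrib]
  unfold ent
  ring

lemma condent_kernel {Ω β γ γ' : Type*} [Fintype Ω] [Fintype β] [Fintype γ] [Fintype γ']
    (p : Ω → ℝ) (hp0 : ∀ ω, 0 ≤ p ω) (C' : Ω → γ') (φ : γ' → γ) (Yv : Ω → β) (K : γ → β → ℝ)
    (hK : ∀ c' y, pr p (fun ω => (C' ω, Yv ω)) (c', y) = pr p C' c' * K (φ c') y) :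
    ent p (fun ω => (Yv ω, C' ω)) - ent p C'
      = ent p (fun ω => (Yv ω, φ (C' ω))) - ent p (fun ω => φ (C' ω)) := by
  have h2 : ∀ c y, pr p (fun ω => (φ (C' ω), Yv ω)) (c, y)
      = pr p (fun ω => φ (C' ω)) c * K c y := by
    intro c y
    refine Eq.trans (pr_comp p (fun ω => (C' ω, Yv ω)) (fun cy => (φ cy.1, cy.2)) (c, y)) ?_
    rw [Fintype.sum_prod_type, pr_comp p C' φ c, Finset.sum_mul]
    refine Finset.sum_congr rfl fun c' _ => ?_
    simp only [Prod.mk.injEq, ite_and]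
    by_cases hc : φ c' = c
    · simp only [hc, if_true, Finset.sum_ite_eq', Finset.mem_univ]
      rw [hK c' y, hc]
    · simp [hc]
  rw [ent_pair_kernel p hp0 C' Yv (fun c' y => K (φ c') y) hK,
    ent_pair_kernel p hp0 (fun ω => φ (C' ω)) Yv K h2]
  have hregroup : ∑ c, ∑ y, pr p (fun ω => φ (C' ω)) c * (K c y * Real.logb 2 (K c y))
      = ∑ c', ∑ y, pr p C' c' * (K (φ c') y * Real.logb 2 (K (φ c') y)) := by
    have : ∀ c, ∑ y, pr p (fun ω => φ (C' ω)) c * (K c y * Real.logb 2 (K c y))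
        = ∑ c', ∑ y, (if φ c' = c then pr p C' c' * (K c y * Real.logb 2 (K c y)) else 0) := by
      intro c
      rw [pr_comp p C' φ c]
      rw [Finset.sum_comm]
      refine Finset.sum_congr rfl fun y _ => ?_
      rw [Finset.sum_mul]
      refine Finset.sum_congr rfl fun c' _ => ?_
      split <;> simp
    rw [Finset.sum_congr rfl fun c _ => this c, Finset.sum_comm]
    refine Finset.sum_congr rfl fun c' _ => ?_
    rw [Finset.sum_comm]
    refine Finset.sum_congr rfl fun y _ => ?_
    rw [Finset.sum_ite_eq Finset.univ (φ c')
      (fun c => pr p C' c' * (K c y * Real.logb 2 (K c y)))]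
    simp
  rw [hregroup]
  ring

lemma ent_pair_indep {Ω α β : Type*} [Fintype Ω] [Fintype α] [Fintype β]
    (p : Ω → ℝ) (hp0 : ∀ ω, 0 ≤ p ω) (hp1 : ∑ ω, p ω = 1) (A : Ω → α) (B : Ω → β)
    (h : ∀ a b, pr p (fun ω => (A ω, B ω)) (a, b) = pr p A a * pr p B b) :
    ent p (fun ω => (A ω, B ω)) = ent p A + ent p B := by
  have h1 := ent_pair_kernel p hp0 A B (fun _ b => pr p B b) h
  have hswap : ent p (fun ω => (A ω, B ω)) = ent p (fun ω => (B ω, A ω)) := by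
    simpa using ent_comp_inj p (fun ω => (B ω, A ω)) Prod.swap Prod.swap_injective
  rw [hswap, h1]
  have e2 : ∑ a, ∑ b, pr p A a * (pr p B b * Real.logb 2 (pr p B b))
      = (∑ a, pr p A a) * ∑ b, pr p B b * Real.logb 2 (pr p B b) := by
    rw [Finset.sum_mul]; exact Finset.sum_congr rfl fun a _ => (Finset.mul_sum _ _ _).symm
  rw [e2, pr_sum, hp1, one_mul]
  unfold ent; ring

lemma pr_transfer {Ω T α : Type*} [Fintype Ω] [Fintype T] (p : Ω → ℝ) (Z : Ω → T) (μ : T → ℝ)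
    (hμ : ∀ t, μ t = pr p Z t) (F : T → α) (c : α) :
    pr μ F c = pr p (fun ω => F (Z ω)) c := by
  rw [pr_comp p Z F c]
  unfold pr
  refine Finset.sum_congr rfl fun t _ => ?_
  rw [hμ t]; rfl

lemma ent_transfer {Ω T α : Type*} [Fintype Ω] [Fintype T] [Fintype α]
    (p : Ω → ℝ) (Z : Ω → T) (μ : T → ℝ) (hμ : ∀ t, μ t = pr p Z t) (F : T → α) :
    ent μ F = ent p (fun ω => F (Z ω)) := by
  unfold ent
  congr 1
  exact Finset.sum_congr rfl fun a _ => by rw [pr_transfer p Z μ hμ]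

lemma sum_ite_swap {α : Type*} [Fintype α] (P : α → Prop) (q : α) (r : α → ℝ) :
    ∑ q', (if P q' then if q' = q then r q' else 0 else 0) = if P q then r q else 0 := by
  have step : ∀ q', (if P q' then if q' = q then r q' else 0 else 0)
      = if q' = q then (if P q then r q else 0) else 0 := by
    intro q'
    by_cases hq : q' = q
    · subst hq; simp
    · simp [hq]
  simp only [step, Finset.sum_ite_eq', Finset.mem_univ, if_true]

section CanonicalSpace

variable {Qt Xt' Wt' Xt Wt Yt : Type*}
  [Fintype Qt] [Fintype Xt'] [Fintype Wt'] [Fintype Xt] [Fintype Wt] [Fintype Yt]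

/-- The canonical joint pmf on `Q × X' × W' × Y`. -/
def mu {Qt Xt' Wt' Xt Wt Yt : Type*} (f : Qt → ℝ) (g : Xt' → ℝ) (h : Wt' → ℝ)
    (Ch : Xt → Wt → Yt → ℝ) (x : Xt' → Qt → Xt) (w : Wt' → Qt → Wt) :
    Qt × Xt' × Wt' × Yt → ℝ :=
  fun t => f t.1 * g t.2.1 * h t.2.2.1 * Ch (x t.2.1 t.1) (w t.2.2.1 t.1) t.2.2.2

variable (f : Qt → ℝ) (g : Xt' → ℝ) (h : Wt' → ℝ) (Ch : Xt → Wt → Yt → ℝ)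
    (x : Xt' → Qt → Xt) (w : Wt' → Qt → Wt)
    (hf1 : ∑ q, f q = 1) (hg1 : ∑ a, g a = 1) (hh1 : ∑ b, h b = 1)
    (hCh1 : ∀ xv wv, ∑ y, Ch xv wv y = 1)

local notation "μ" => mu f g h Ch x w

set_option linter.unusedSectionVars false

include hf1 hg1 hh1 hCh1

lemma mu_sum : ∑ t, μ t = 1 := by
  unfold mu
  simp only [Fintype.sum_prod_type, ← Finset.mul_sum, hCh1, mul_one, hh1, hg1, hf1]

lemma m_Q (q : Qt) : pr μ (fun t => t.1) q = f q := by
  unfold pr mu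
  simp only [Fintype.sum_prod_type, Prod.mk.injEq, ite_and, Finset.sum_ite_irrel,
    Finset.sum_const_zero, Finset.sum_ite_eq', Finset.mem_univ, if_true,
    ← Finset.mul_sum, hCh1, hg1, hh1, hf1, mul_one]

lemma m_X (a : Xt') : pr μ (fun t => t.2.1) a = g a := by
  unfold pr mu
  simp only [Fintype.sum_prod_type, Prod.mk.injEq, ite_and, Finset.sum_ite_irrel,
    Finset.sum_const_zero, Finset.sum_ite_eq', Finset.mem_univ, if_true,
    ← Finset.mul_sum, hCh1, hg1, hh1, hf1, mul_one]
  rw [← Finset.sum_mul, hf1, one_mul]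

lemma m_W (b : Wt') : pr μ (fun t => t.2.2.1) b = h b := by
  unfold pr mu
  simp only [Fintype.sum_prod_type, Prod.mk.injEq, ite_and, Finset.sum_ite_irrel,
    Finset.sum_const_zero, Finset.sum_ite_eq', Finset.mem_univ, if_true,
    ← Finset.mul_sum, hCh1, hg1, hh1, hf1, mul_one]
  simp only [mul_assoc, ← Finset.mul_sum, ← Finset.sum_mul, hg1, hf1, mul_one, one_mul]

lemma m_XW (a : Xt') (b : Wt') : pr μ (fun t => (t.2.1, t.2.2.1)) (a, b) = g a * h b := by
  unfold pr mu
  simp only [Fintype.sum_prod_type, Prod.mk.injEq, ite_and, Finset.sum_ite_irrel,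
    Finset.sum_const_zero, Finset.sum_ite_eq', Finset.mem_univ, if_true,
    ← Finset.mul_sum, hCh1, hg1, hh1, hf1, mul_one]
  simp only [mul_assoc, ← Finset.sum_mul, hf1, one_mul]

lemma m_QW (q : Qt) (b : Wt') : pr μ (fun t => (t.1, t.2.2.1)) (q, b) = f q * h b := by
  unfold pr mu
  simp only [Fintype.sum_prod_type, Prod.mk.injEq, ite_and, Finset.sum_ite_irrel,
    Finset.sum_const_zero, Finset.sum_ite_eq', Finset.mem_univ, if_true,
    ← Finset.mul_sum, hCh1, hg1, hh1, hf1, mul_one]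
  rw [← Finset.sum_mul, ← Finset.mul_sum, hg1, mul_one]

lemma m_QX (q : Qt) (a : Xt') : pr μ (fun t => (t.1, t.2.1)) (q, a) = f q * g a := by
  unfold pr mu
  simp only [Fintype.sum_prod_type, Prod.mk.injEq, ite_and, Finset.sum_ite_irrel,
    Finset.sum_const_zero, Finset.sum_ite_eq', Finset.mem_univ, if_true,
    ← Finset.mul_sum, hCh1, hg1, hh1, hf1, mul_one]

lemma m_QXW (q : Qt) (a : Xt') (b : Wt') :
    pr μ (fun t => (t.1, t.2.1, t.2.2.1)) (q, a, b) = f q * (g a * h b) := by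
  unfold pr mu
  simp only [Fintype.sum_prod_type, Prod.mk.injEq, ite_and, Finset.sum_ite_irrel,
    Finset.sum_const_zero, Finset.sum_ite_eq', Finset.mem_univ, if_true,
    ← Finset.mul_sum, hCh1, hg1, hh1, hf1, mul_one]
  ring

lemma m_Full (q : Qt) (a : Xt') (b : Wt') (y : Yt) :
    pr μ (fun t => ((t.1, t.2.1, t.2.2.1), t.2.2.2)) ((q, a, b), y)
      = f q * (g a * h b) * Ch (x a q) (w b q) y := by
  unfold pr mu
  simp only [Fintype.sum_prod_type, Prod.mk.injEq, ite_and, Finset.sum_ite_irrel,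
    Finset.sum_const_zero, Finset.sum_ite_eq', Finset.mem_univ, if_true]
  ring

lemma m_QWY (q : Qt) (b : Wt') (y : Yt) :
    pr μ (fun t => ((t.1, t.2.2.1), t.2.2.2)) ((q, b), y)
      = f q * h b * ∑ a, g a * Ch (x a q) (w b q) y := by
  unfold pr mu
  simp only [Fintype.sum_prod_type, Prod.mk.injEq, ite_and, Finset.sum_ite_irrel,
    Finset.sum_const_zero, Finset.sum_ite_eq', Finset.mem_univ, if_true]
  rw [Finset.mul_sum]
  exact Finset.sum_congr rfl fun a _ => by ring

lemma m_QXY (q : Qt) (a : Xt') (y : Yt) :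
    pr μ (fun t => ((t.1, t.2.1), t.2.2.2)) ((q, a), y)
      = f q * g a * ∑ b, h b * Ch (x a q) (w b q) y := by
  unfold pr mu
  simp only [Fintype.sum_prod_type, Prod.mk.injEq, ite_and, Finset.sum_ite_irrel,
    Finset.sum_const_zero, Finset.sum_ite_eq', Finset.mem_univ, if_true]
  rw [Finset.mul_sum]
  exact Finset.sum_congr rfl fun b _ => by ring

lemma m_XQ (x0 : Xt) (q : Qt) :
    pr μ (fun t => (x t.2.1 t.1, t.1)) (x0, q)
      = f q * ∑ a, (if x a q = x0 then g a else 0) := by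
  unfold pr mu
  simp only [Fintype.sum_prod_type, Prod.mk.injEq, ite_and, Finset.sum_ite_irrel,
    Finset.sum_const_zero]
  rw [Finset.sum_comm]
  rw [Finset.sum_congr rfl fun a _ => sum_ite_swap (fun q' => x a q' = x0) q _]
  rw [Finset.mul_sum]
  refine Finset.sum_congr rfl fun a _ => ?_
  by_cases hc : x a q = x0
  · simp only [hc, if_true]
    simp only [← Finset.mul_sum, hCh1, mul_one, hh1]
  · simp [hc]

lemma m_WQ (w0 : Wt) (q : Qt) :
    pr μ (fun t => (w t.2.2.1 t.1, t.1)) (w0, q)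
      = f q * ∑ b, (if w b q = w0 then h b else 0) := by
  unfold pr mu
  simp only [Fintype.sum_prod_type, Prod.mk.injEq, ite_and, Finset.sum_ite_irrel,
    Finset.sum_const_zero]
  rw [Finset.sum_congr rfl fun q' _ => Finset.sum_comm]
  rw [Finset.sum_comm]
  rw [Finset.sum_congr rfl fun b _ => Finset.sum_comm]
  rw [Finset.sum_congr rfl fun b _ => Finset.sum_congr rfl fun a _ =>
    sum_ite_swap (fun q' => w b q' = w0) q _]
  rw [Finset.mul_sum]
  refine Finset.sum_congr rfl fun b _ => ?_
  by_cases hc : w b q = w0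
  · simp only [hc, if_true]
    simp only [← Finset.mul_sum, hCh1, mul_one]
    rw [← Finset.sum_mul, ← Finset.mul_sum, hg1, mul_one]
  · simp [hc]

lemma m_XQW (x0 : Xt) (q : Qt) (w0 : Wt) :
    pr μ (fun t => ((x t.2.1 t.1, t.1), w t.2.2.1 t.1)) ((x0, q), w0)
      = (f q * ∑ a, (if x a q = x0 then g a else 0))
        * ∑ b, (if w b q = w0 then h b else 0) := by
  unfold pr mu
  simp only [Fintype.sum_prod_type, Prod.mk.injEq, ite_and, Finset.sum_ite_irrel,
    Finset.sum_const_zero]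
  rw [Finset.sum_comm]
  rw [Finset.sum_congr rfl fun a _ => sum_ite_swap (fun q' => x a q' = x0) q _]
  simp only [← Finset.mul_sum, hCh1, mul_one]
  calc ∑ a, (if x a q = x0 then (∑ b, if w b q = w0 then f q * g a * h b else 0) else 0)
      = ∑ a, (if x a q = x0 then g a else 0)
          * (f q * ∑ b, (if w b q = w0 then h b else 0)) := by
        refine Finset.sum_congr rfl fun a _ => ?_
        by_cases hc : x a q = x0
        · simp only [hc, if_true]
          rw [Finset.mul_sum, Finset.mul_sum]
          exact Finset.sum_congr rfl fun b _ => by split <;> ring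
        · simp [hc]
    _ = (∑ a, (if x a q = x0 then g a else 0))
          * (f q * ∑ b, (if w b q = w0 then h b else 0)) := by rw [Finset.sum_mul]
    _ = (f q * ∑ a, (if x a q = x0 then g a else 0))
          * ∑ b, (if w b q = w0 then h b else 0) := by ring

lemma m_WQX (w0 : Wt) (q : Qt) (x0 : Xt) :
    pr μ (fun t => ((w t.2.2.1 t.1, t.1), x t.2.1 t.1)) ((w0, q), x0)
      = (f q * ∑ b, (if w b q = w0 then h b else 0))
        * ∑ a, (if x a q = x0 then g a else 0) := by
  unfold pr mu
  simp only [Fintype.sum_prod_type, Prod.mk.injEq, ite_and, Finset.sum_ite_irrel,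
    Finset.sum_const_zero]
  rw [Finset.sum_congr rfl fun q' _ => Finset.sum_comm]
  rw [Finset.sum_comm]
  rw [Finset.sum_congr rfl fun b _ => Finset.sum_comm]
  rw [Finset.sum_congr rfl fun b _ => Finset.sum_congr rfl fun a _ =>
    sum_ite_swap (fun q' => w b q' = w0) q _]
  simp only [← Finset.mul_sum, hCh1, mul_one]
  calc ∑ b, ∑ a, (if w b q = w0 then (if x a q = x0 then f q * g a * h b else 0) else 0)
      = ∑ b, (if w b q = w0 then h b else 0)
          * (f q * ∑ a, (if x a q = x0 then g a else 0)) := by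
        refine Finset.sum_congr rfl fun b _ => ?_
        by_cases hc : w b q = w0
        · simp only [hc, if_true]
          rw [Finset.mul_sum, Finset.mul_sum]
          exact Finset.sum_congr rfl fun a _ => by split <;> ring
        · simp [hc]
    _ = (∑ b, (if w b q = w0 then h b else 0))
          * (f q * ∑ a, (if x a q = x0 then g a else 0)) := by rw [Finset.sum_mul]
    _ = (f q * ∑ b, (if w b q = w0 then h b else 0))
          * ∑ a, (if x a q = x0 then g a else 0) := by ring

variable (hf0 : ∀ q, 0 ≤ f q) (hg0 : ∀ a, 0 ≤ g a) (hh0 : ∀ b, 0 ≤ h b)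
    (hCh0 : ∀ xv wv y, 0 ≤ Ch xv wv y)

include hf0 hg0 hh0 hCh0

lemma key :
    (ent μ (fun t => t.2.1) + ent μ (fun t => (t.2.2.2, t.1, t.2.2.1))
        - ent μ (fun t => (t.2.1, t.2.2.2, t.1, t.2.2.1))
      = ent μ (fun t => (x t.2.1 t.1, t.1)) + ent μ (fun t => ((t.2.2.2, w t.2.2.1 t.1), t.1))
        - ent μ (fun t => (x t.2.1 t.1, (t.2.2.2, w t.2.2.1 t.1), t.1)) - ent μ (fun t => t.1)) ∧
    (ent μ (fun t => t.2.2.1) + ent μ (fun t => (t.2.2.2, t.1, t.2.1))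
        - ent μ (fun t => (t.2.2.1, t.2.2.2, t.1, t.2.1))
      = ent μ (fun t => (w t.2.2.1 t.1, t.1)) + ent μ (fun t => ((t.2.2.2, x t.2.1 t.1), t.1))
        - ent μ (fun t => (w t.2.2.1 t.1, (t.2.2.2, x t.2.1 t.1), t.1)) - ent μ (fun t => t.1)) ∧
    (ent μ (fun t => (t.2.1, t.2.2.1)) + ent μ (fun t => (t.2.2.2, t.1))
        - ent μ (fun t => ((t.2.1, t.2.2.1), t.2.2.2, t.1))
      = ent μ (fun t => ((x t.2.1 t.1, w t.2.2.1 t.1), t.1)) + ent μ (fun t => (t.2.2.2, t.1))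
        - ent μ (fun t => ((x t.2.1 t.1, w t.2.2.1 t.1), t.2.2.2, t.1))
        - ent μ (fun t => t.1)) := by
  have hμ0 : ∀ t, 0 ≤ μ t := fun t =>
    mul_nonneg (mul_nonneg (mul_nonneg (hf0 _) (hg0 _)) (hh0 _)) (hCh0 _ _ _)
  have hμ1 : ∑ t, μ t = 1 := mu_sum f g h Ch x w hf1 hg1 hh1 hCh1
  -- kernel facts
  have hKfull : ∀ (c : Qt × Xt' × Wt') (y : Yt),
      pr μ (fun t => ((t.1, t.2.1, t.2.2.1), t.2.2.2)) (c, y)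
        = pr μ (fun t => (t.1, t.2.1, t.2.2.1)) c * Ch (x c.2.1 c.1) (w c.2.2 c.1) y := by
    rintro ⟨q, a, b⟩ y
    rw [m_Full f g h Ch x w hf1 hg1 hh1 hCh1, m_QXW f g h Ch x w hf1 hg1 hh1 hCh1]
  have r1 : ent μ (fun t => (t.2.2.2, t.1, t.2.1, t.2.2.1)) - ent μ (fun t => (t.1, t.2.1, t.2.2.1))
      = ent μ (fun t => (t.2.2.2, w t.2.2.1 t.1, x t.2.1 t.1, t.1))
        - ent μ (fun t => (w t.2.2.1 t.1, x t.2.1 t.1, t.1)) :=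
    condent_kernel μ hμ0 (fun t => (t.1, t.2.1, t.2.2.1))
      (fun c => (w c.2.2 c.1, x c.2.1 c.1, c.1)) (fun t => t.2.2.2)
      (fun d y => Ch d.2.1 d.1 y) hKfull
  have r2 : ent μ (fun t => (t.2.2.2, t.1, t.2.1, t.2.2.1)) - ent μ (fun t => (t.1, t.2.1, t.2.2.1))
      = ent μ (fun t => (t.2.2.2, x t.2.1 t.1, w t.2.2.1 t.1, t.1))
        - ent μ (fun t => (x t.2.1 t.1, w t.2.2.1 t.1, t.1)) :=
    condent_kernel μ hμ0 (fun t => (t.1, t.2.1, t.2.2.1))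
      (fun c => (x c.2.1 c.1, w c.2.2 c.1, c.1)) (fun t => t.2.2.2)
      (fun d y => Ch d.1 d.2.1 y) hKfull
  have r3 : ent μ (fun t => (t.2.2.2, t.1, t.2.1, t.2.2.1)) - ent μ (fun t => (t.1, t.2.1, t.2.2.1))
      = ent μ (fun t => (t.2.2.2, (x t.2.1 t.1, w t.2.2.1 t.1), t.1))
        - ent μ (fun t => ((x t.2.1 t.1, w t.2.2.1 t.1), t.1)) :=
    condent_kernel μ hμ0 (fun t => (t.1, t.2.1, t.2.2.1))
      (fun c => ((x c.2.1 c.1, w c.2.2 c.1), c.1)) (fun t => t.2.2.2)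
      (fun d y => Ch d.1.1 d.1.2 y) hKfull
  have hKW : ∀ (c : Qt × Wt') (y : Yt),
      pr μ (fun t => ((t.1, t.2.2.1), t.2.2.2)) (c, y)
        = pr μ (fun t => (t.1, t.2.2.1)) c * ∑ a, g a * Ch (x a c.1) (w c.2 c.1) y := by
    rintro ⟨q, b⟩ y
    rw [m_QWY f g h Ch x w hf1 hg1 hh1 hCh1, m_QW f g h Ch x w hf1 hg1 hh1 hCh1]
  have rW : ent μ (fun t => (t.2.2.2, t.1, t.2.2.1)) - ent μ (fun t => (t.1, t.2.2.1))
      = ent μ (fun t => (t.2.2.2, t.1, w t.2.2.1 t.1)) - ent μ (fun t => (t.1, w t.2.2.1 t.1)) :=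
    condent_kernel μ hμ0 (fun t => (t.1, t.2.2.1)) (fun c => (c.1, w c.2 c.1))
      (fun t => t.2.2.2) (fun d y => ∑ a, g a * Ch (x a d.1) d.2 y) hKW
  have hKX : ∀ (c : Qt × Xt') (y : Yt),
      pr μ (fun t => ((t.1, t.2.1), t.2.2.2)) (c, y)
        = pr μ (fun t => (t.1, t.2.1)) c * ∑ b, h b * Ch (x c.2 c.1) (w b c.1) y := by
    rintro ⟨q, a⟩ y
    rw [m_QXY f g h Ch x w hf1 hg1 hh1 hCh1, m_QX f g h Ch x w hf1 hg1 hh1 hCh1]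
  have rX : ent μ (fun t => (t.2.2.2, t.1, t.2.1)) - ent μ (fun t => (t.1, t.2.1))
      = ent μ (fun t => (t.2.2.2, t.1, x t.2.1 t.1)) - ent μ (fun t => (t.1, x t.2.1 t.1)) :=
    condent_kernel μ hμ0 (fun t => (t.1, t.2.1)) (fun c => (c.1, x c.2 c.1))
      (fun t => t.2.2.2) (fun d y => ∑ b, h b * Ch d.2 (w b d.1) y) hKX
  have hKXW : ∀ (c : Xt × Qt) (w0 : Wt),
      pr μ (fun t => ((x t.2.1 t.1, t.1), w t.2.2.1 t.1)) (c, w0)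
        = pr μ (fun t => (x t.2.1 t.1, t.1)) c * ∑ b, (if w b c.2 = w0 then h b else 0) := by
    rintro ⟨x0, q⟩ w0
    rw [m_XQW f g h Ch x w hf1 hg1 hh1 hCh1, m_XQ f g h Ch x w hf1 hg1 hh1 hCh1]
  have rXW : ent μ (fun t => (w t.2.2.1 t.1, x t.2.1 t.1, t.1))
        - ent μ (fun t => (x t.2.1 t.1, t.1))
      = ent μ (fun t => (w t.2.2.1 t.1, t.1)) - ent μ (fun t => t.1) :=
    condent_kernel μ hμ0 (fun t => (x t.2.1 t.1, t.1)) (fun c => c.2)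
      (fun t => w t.2.2.1 t.1) (fun q w0 => ∑ b, (if w b q = w0 then h b else 0)) hKXW
  have hKWX : ∀ (c : Wt × Qt) (x0 : Xt),
      pr μ (fun t => ((w t.2.2.1 t.1, t.1), x t.2.1 t.1)) (c, x0)
        = pr μ (fun t => (w t.2.2.1 t.1, t.1)) c * ∑ a, (if x a c.2 = x0 then g a else 0) := by
    rintro ⟨w0, q⟩ x0
    rw [m_WQX f g h Ch x w hf1 hg1 hh1 hCh1, m_WQ f g h Ch x w hf1 hg1 hh1 hCh1]
  have rWX : ent μ (fun t => (x t.2.1 t.1, w t.2.2.1 t.1, t.1))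
        - ent μ (fun t => (w t.2.2.1 t.1, t.1))
      = ent μ (fun t => (x t.2.1 t.1, t.1)) - ent μ (fun t => t.1) :=
    condent_kernel μ hμ0 (fun t => (w t.2.2.1 t.1, t.1)) (fun c => c.2)
      (fun t => x t.2.1 t.1) (fun q x0 => ∑ a, (if x a q = x0 then g a else 0)) hKWX
  -- additivity from independence
  have a1 : ent μ (fun t => (t.1, t.2.1, t.2.2.1))
      = ent μ (fun t => t.1) + ent μ (fun t => (t.2.1, t.2.2.1)) := by
    refine ent_pair_indep μ hμ0 hμ1 _ _ ?_
    rintro q ⟨a, b⟩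
    rw [m_QXW f g h Ch x w hf1 hg1 hh1 hCh1, m_Q f g h Ch x w hf1 hg1 hh1 hCh1,
      m_XW f g h Ch x w hf1 hg1 hh1 hCh1]
  have a2 : ent μ (fun t => (t.2.1, t.2.2.1))
      = ent μ (fun t => t.2.1) + ent μ (fun t => t.2.2.1) := by
    refine ent_pair_indep μ hμ0 hμ1 _ _ ?_
    intro a b
    rw [m_XW f g h Ch x w hf1 hg1 hh1 hCh1, m_X f g h Ch x w hf1 hg1 hh1 hCh1,
      m_W f g h Ch x w hf1 hg1 hh1 hCh1]
  have a3 : ent μ (fun t => (t.1, t.2.2.1))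
      = ent μ (fun t => t.1) + ent μ (fun t => t.2.2.1) := by
    refine ent_pair_indep μ hμ0 hμ1 _ _ ?_
    intro q b
    rw [m_QW f g h Ch x w hf1 hg1 hh1 hCh1, m_Q f g h Ch x w hf1 hg1 hh1 hCh1,
      m_W f g h Ch x w hf1 hg1 hh1 hCh1]
  have a4 : ent μ (fun t => (t.1, t.2.1))
      = ent μ (fun t => t.1) + ent μ (fun t => t.2.1) := by
    refine ent_pair_indep μ hμ0 hμ1 _ _ ?_
    intro q a
    rw [m_QX f g h Ch x w hf1 hg1 hh1 hCh1, m_Q f g h Ch x w hf1 hg1 hh1 hCh1,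
      m_X f g h Ch x w hf1 hg1 hh1 hCh1]
  -- relabelings
  have g1 : ent μ (fun t => (t.2.1, t.2.2.2, t.1, t.2.2.1))
      = ent μ (fun t => (t.2.2.2, t.1, t.2.1, t.2.2.1)) :=
    ent_comp_inj μ (fun t => (t.2.2.2, t.1, t.2.1, t.2.2.1))
      (fun v => (v.2.2.1, v.1, v.2.1, v.2.2.2))
      (by rintro ⟨y, q, a, b⟩ ⟨y', q', a', b'⟩ hv
          simp only [Prod.mk.injEq] at hv ⊢; tauto)
  have g1x : ent μ (fun t => (t.2.2.1, t.2.2.2, t.1, t.2.1))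
      = ent μ (fun t => (t.2.2.2, t.1, t.2.1, t.2.2.1)) :=
    ent_comp_inj μ (fun t => (t.2.2.2, t.1, t.2.1, t.2.2.1))
      (fun v => (v.2.2.2, v.1, v.2.1, v.2.2.1))
      (by rintro ⟨y, q, a, b⟩ ⟨y', q', a', b'⟩ hv
          simp only [Prod.mk.injEq] at hv ⊢; tauto)
  have g6 : ent μ (fun t => ((t.2.1, t.2.2.1), t.2.2.2, t.1))
      = ent μ (fun t => (t.2.2.2, t.1, t.2.1, t.2.2.1)) :=
    ent_comp_inj μ (fun t => (t.2.2.2, t.1, t.2.1, t.2.2.1))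
      (fun v => ((v.2.2.1, v.2.2.2), v.1, v.2.1))
      (by rintro ⟨y, q, a, b⟩ ⟨y', q', a', b'⟩ hv
          simp only [Prod.mk.injEq] at hv ⊢; tauto)
  have g2 : ent μ (fun t => ((t.2.2.2, w t.2.2.1 t.1), t.1))
      = ent μ (fun t => (t.2.2.2, w t.2.2.1 t.1, t.1)) :=
    ent_comp_inj μ (fun t => (t.2.2.2, w t.2.2.1 t.1, t.1))
      (fun v => ((v.1, v.2.1), v.2.2))
      (by rintro ⟨y, w0, q⟩ ⟨y', w0', q'⟩ hv
          simp only [Prod.mk.injEq] at hv ⊢; tauto)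
  have g2x : ent μ (fun t => ((t.2.2.2, x t.2.1 t.1), t.1))
      = ent μ (fun t => (t.2.2.2, x t.2.1 t.1, t.1)) :=
    ent_comp_inj μ (fun t => (t.2.2.2, x t.2.1 t.1, t.1))
      (fun v => ((v.1, v.2.1), v.2.2))
      (by rintro ⟨y, x0, q⟩ ⟨y', x0', q'⟩ hv
          simp only [Prod.mk.injEq] at hv ⊢; tauto)
  have g3 : ent μ (fun t => (x t.2.1 t.1, (t.2.2.2, w t.2.2.1 t.1), t.1))
      = ent μ (fun t => (t.2.2.2, w t.2.2.1 t.1, x t.2.1 t.1, t.1)) :=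
    ent_comp_inj μ (fun t => (t.2.2.2, w t.2.2.1 t.1, x t.2.1 t.1, t.1))
      (fun v => (v.2.2.1, (v.1, v.2.1), v.2.2.2))
      (by rintro ⟨y, w0, x0, q⟩ ⟨y', w0', x0', q'⟩ hv
          simp only [Prod.mk.injEq] at hv ⊢; tauto)
  have g3x : ent μ (fun t => (w t.2.2.1 t.1, (t.2.2.2, x t.2.1 t.1), t.1))
      = ent μ (fun t => (t.2.2.2, x t.2.1 t.1, w t.2.2.1 t.1, t.1)) :=
    ent_comp_inj μ (fun t => (t.2.2.2, x t.2.1 t.1, w t.2.2.1 t.1, t.1))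
      (fun v => (v.2.2.1, (v.1, v.2.1), v.2.2.2))
      (by rintro ⟨y, x0, w0, q⟩ ⟨y', x0', w0', q'⟩ hv
          simp only [Prod.mk.injEq] at hv ⊢; tauto)
  have g4 : ent μ (fun t => (t.2.2.2, w t.2.2.1 t.1, t.1))
      = ent μ (fun t => (t.2.2.2, t.1, w t.2.2.1 t.1)) :=
    ent_comp_inj μ (fun t => (t.2.2.2, t.1, w t.2.2.1 t.1))
      (fun v => (v.1, v.2.2, v.2.1))
      (by rintro ⟨y, q, w0⟩ ⟨y', q', w0'⟩ hv
          simp only [Prod.mk.injEq] at hv ⊢; tauto)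
  have g4x : ent μ (fun t => (t.2.2.2, x t.2.1 t.1, t.1))
      = ent μ (fun t => (t.2.2.2, t.1, x t.2.1 t.1)) :=
    ent_comp_inj μ (fun t => (t.2.2.2, t.1, x t.2.1 t.1))
      (fun v => (v.1, v.2.2, v.2.1))
      (by rintro ⟨y, q, x0⟩ ⟨y', q', x0'⟩ hv
          simp only [Prod.mk.injEq] at hv ⊢; tauto)
  have g5 : ent μ (fun t => (w t.2.2.1 t.1, t.1)) = ent μ (fun t => (t.1, w t.2.2.1 t.1)) :=
    ent_comp_inj μ (fun t => (t.1, w t.2.2.1 t.1)) (fun v => (v.2, v.1))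
      (by rintro ⟨q, w0⟩ ⟨q', w0'⟩ hv
          simp only [Prod.mk.injEq] at hv ⊢; tauto)
  have g5x : ent μ (fun t => (x t.2.1 t.1, t.1)) = ent μ (fun t => (t.1, x t.2.1 t.1)) :=
    ent_comp_inj μ (fun t => (t.1, x t.2.1 t.1)) (fun v => (v.2, v.1))
      (by rintro ⟨q, x0⟩ ⟨q', x0'⟩ hv
          simp only [Prod.mk.injEq] at hv ⊢; tauto)
  have g7 : ent μ (fun t => ((x t.2.1 t.1, w t.2.2.1 t.1), t.2.2.2, t.1))
      = ent μ (fun t => (t.2.2.2, (x t.2.1 t.1, w t.2.2.1 t.1), t.1)) :=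
    ent_comp_inj μ (fun t => (t.2.2.2, (x t.2.1 t.1, w t.2.2.1 t.1), t.1))
      (fun v => (v.2.1, v.1, v.2.2))
      (by rintro ⟨y, xw, q⟩ ⟨y', xw', q'⟩ hv
          simp only [Prod.mk.injEq] at hv ⊢; tauto)
  refine ⟨?_, ?_, ?_⟩
  · linarith [r1, rW, rXW, a1, a2, a3, g1, g2, g3, g4, g5]
  · linarith [r2, rX, rWX, a1, a2, a4, g1x, g2x, g3x, g4x, g5x]
  · linarith [r3, a1, g6, g7]

end CanonicalSpace

/-- Under the functional representation `X = x(X′,Q)`, `W = w(W′,Q)` with `X′, W′, Q`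
mutually independent and `Y` generated from `(X, W)` by a channel `P(y|x,w)`:
`I(X′; Y, Q, W′) = I(X; Y, W | Q)`, `I(W′; Y, Q, X′) = I(W; Y, X | Q)`, and
`I(X′, W′; Y, Q) = I(X, W; Y | Q)`. -/
theorem stmt15 {Ω Qt Xt' Wt' Xt Wt Yt : Type*}
    [Fintype Ω] [Fintype Qt] [Fintype Xt'] [Fintype Wt'] [Fintype Xt] [Fintype Wt]
    [Fintype Yt]
    (p : Ω → ℝ) (hp0 : ∀ ω, 0 ≤ p ω) (hp1 : ∑ ω, p ω = 1)
    (Q : Ω → Qt) (X' : Ω → Xt') (W' : Ω → Wt') (Y : Ω → Yt)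
    (x : Xt' → Qt → Xt) (w : Wt' → Qt → Wt)
    -- `Q, X′, W′` mutually independent
    (hindep : ∀ q a b, pr p (fun ω => (Q ω, X' ω, W' ω)) (q, a, b)
      = pr p Q q * pr p X' a * pr p W' b)
    -- `Y` is generated from `(X, W) = (x(X′,Q), w(W′,Q))` by the channel `Ch`
    (Ch : Xt → Wt → Yt → ℝ)
    (hCh0 : ∀ xv wv y, 0 ≤ Ch xv wv y) (hCh1 : ∀ xv wv, ∑ y, Ch xv wv y = 1)
    (hchannel : ∀ q a b y, pr p (fun ω => (Q ω, X' ω, W' ω, Y ω)) (q, a, b, y)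
      = pr p (fun ω => (Q ω, X' ω, W' ω)) (q, a, b) * Ch (x a q) (w b q) y) :
    mi p X' (fun ω => (Y ω, Q ω, W' ω))
        = condMI p (fun ω => x (X' ω) (Q ω)) (fun ω => (Y ω, w (W' ω) (Q ω))) Q ∧
    mi p W' (fun ω => (Y ω, Q ω, X' ω))
        = condMI p (fun ω => w (W' ω) (Q ω)) (fun ω => (Y ω, x (X' ω) (Q ω))) Q ∧
    mi p (fun ω => (X' ω, W' ω)) (fun ω => (Y ω, Q ω))
        = condMI p (fun ω => (x (X' ω) (Q ω), w (W' ω) (Q ω))) Y Q := by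
  set μ : Qt × Xt' × Wt' × Yt → ℝ := mu (pr p Q) (pr p X') (pr p W') Ch x w with hμdef
  have hμ : ∀ t : Qt × Xt' × Wt' × Yt, μ t = pr p (fun ω => (Q ω, X' ω, W' ω, Y ω)) t := by
    rintro ⟨q, a, b, y⟩
    rw [hchannel q a b y, hindep q a b]
    rfl
  have hf1 : ∑ q, pr p Q q = 1 := by rw [pr_sum]; exact hp1
  have hg1 : ∑ a, pr p X' a = 1 := by rw [pr_sum]; exact hp1
  have hh1 : ∑ b, pr p W' b = 1 := by rw [pr_sum]; exact hp1
  have hk := key (pr p Q) (pr p X') (pr p W') Ch x w hf1 hg1 hh1 hCh1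
    (pr_nonneg p hp0 Q) (pr_nonneg p hp0 X') (pr_nonneg p hp0 W') hCh0
  -- transfer equalities
  have tr1 : ent p X' = ent μ (fun t => t.2.1) := (ent_transfer p (fun ω => (Q ω, X' ω, W' ω, Y ω)) μ hμ (fun t => t.2.1)).symm
  have tr1x : ent p W' = ent μ (fun t => t.2.2.1) := (ent_transfer p (fun ω => (Q ω, X' ω, W' ω, Y ω)) μ hμ (fun t => t.2.2.1)).symm
  have tr7 : ent p Q = ent μ (fun t => t.1) := (ent_transfer p (fun ω => (Q ω, X' ω, W' ω, Y ω)) μ hμ (fun t => t.1)).symm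
  have tr2 : ent p (fun ω => (Y ω, Q ω, W' ω))
      = ent μ (fun t => (t.2.2.2, t.1, t.2.2.1)) :=
    (ent_transfer p (fun ω => (Q ω, X' ω, W' ω, Y ω)) μ hμ (fun t => (t.2.2.2, t.1, t.2.2.1))).symm
  have tr2x : ent p (fun ω => (Y ω, Q ω, X' ω))
      = ent μ (fun t => (t.2.2.2, t.1, t.2.1)) :=
    (ent_transfer p (fun ω => (Q ω, X' ω, W' ω, Y ω)) μ hμ (fun t => (t.2.2.2, t.1, t.2.1))).symm
  have tr3 : ent p (fun ω => (X' ω, Y ω, Q ω, W' ω))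
      = ent μ (fun t => (t.2.1, t.2.2.2, t.1, t.2.2.1)) :=
    (ent_transfer p (fun ω => (Q ω, X' ω, W' ω, Y ω)) μ hμ (fun t => (t.2.1, t.2.2.2, t.1, t.2.2.1))).symm
  have tr3x : ent p (fun ω => (W' ω, Y ω, Q ω, X' ω))
      = ent μ (fun t => (t.2.2.1, t.2.2.2, t.1, t.2.1)) :=
    (ent_transfer p (fun ω => (Q ω, X' ω, W' ω, Y ω)) μ hμ (fun t => (t.2.2.1, t.2.2.2, t.1, t.2.1))).symm
  have tr4 : ent p (fun ω => (x (X' ω) (Q ω), Q ω))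
      = ent μ (fun t => (x t.2.1 t.1, t.1)) :=
    (ent_transfer p (fun ω => (Q ω, X' ω, W' ω, Y ω)) μ hμ (fun t => (x t.2.1 t.1, t.1))).symm
  have tr4x : ent p (fun ω => (w (W' ω) (Q ω), Q ω))
      = ent μ (fun t => (w t.2.2.1 t.1, t.1)) :=
    (ent_transfer p (fun ω => (Q ω, X' ω, W' ω, Y ω)) μ hμ (fun t => (w t.2.2.1 t.1, t.1))).symm
  have tr5 : ent p (fun ω => ((Y ω, w (W' ω) (Q ω)), Q ω))
      = ent μ (fun t => ((t.2.2.2, w t.2.2.1 t.1), t.1)) :=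
    (ent_transfer p (fun ω => (Q ω, X' ω, W' ω, Y ω)) μ hμ (fun t => ((t.2.2.2, w t.2.2.1 t.1), t.1))).symm
  have tr5x : ent p (fun ω => ((Y ω, x (X' ω) (Q ω)), Q ω))
      = ent μ (fun t => ((t.2.2.2, x t.2.1 t.1), t.1)) :=
    (ent_transfer p (fun ω => (Q ω, X' ω, W' ω, Y ω)) μ hμ (fun t => ((t.2.2.2, x t.2.1 t.1), t.1))).symm
  have tr6 : ent p (fun ω => (x (X' ω) (Q ω), (Y ω, w (W' ω) (Q ω)), Q ω))
      = ent μ (fun t => (x t.2.1 t.1, (t.2.2.2, w t.2.2.1 t.1), t.1)) :=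
    (ent_transfer p (fun ω => (Q ω, X' ω, W' ω, Y ω)) μ hμ (fun t => (x t.2.1 t.1, (t.2.2.2, w t.2.2.1 t.1), t.1))).symm
  have tr6x : ent p (fun ω => (w (W' ω) (Q ω), (Y ω, x (X' ω) (Q ω)), Q ω))
      = ent μ (fun t => (w t.2.2.1 t.1, (t.2.2.2, x t.2.1 t.1), t.1)) :=
    (ent_transfer p (fun ω => (Q ω, X' ω, W' ω, Y ω)) μ hμ (fun t => (w t.2.2.1 t.1, (t.2.2.2, x t.2.1 t.1), t.1))).symm
  have tr8 : ent p (fun ω => (X' ω, W' ω)) = ent μ (fun t => (t.2.1, t.2.2.1)) :=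
    (ent_transfer p (fun ω => (Q ω, X' ω, W' ω, Y ω)) μ hμ (fun t => (t.2.1, t.2.2.1))).symm
  have tr9 : ent p (fun ω => (Y ω, Q ω)) = ent μ (fun t => (t.2.2.2, t.1)) :=
    (ent_transfer p (fun ω => (Q ω, X' ω, W' ω, Y ω)) μ hμ (fun t => (t.2.2.2, t.1))).symm
  have tr10 : ent p (fun ω => ((X' ω, W' ω), Y ω, Q ω))
      = ent μ (fun t => ((t.2.1, t.2.2.1), t.2.2.2, t.1)) :=
    (ent_transfer p (fun ω => (Q ω, X' ω, W' ω, Y ω)) μ hμ (fun t => ((t.2.1, t.2.2.1), t.2.2.2, t.1))).symm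
  have tr11 : ent p (fun ω => ((x (X' ω) (Q ω), w (W' ω) (Q ω)), Q ω))
      = ent μ (fun t => ((x t.2.1 t.1, w t.2.2.1 t.1), t.1)) :=
    (ent_transfer p (fun ω => (Q ω, X' ω, W' ω, Y ω)) μ hμ (fun t => ((x t.2.1 t.1, w t.2.2.1 t.1), t.1))).symm
  have tr12 : ent p (fun ω => ((x (X' ω) (Q ω), w (W' ω) (Q ω)), Y ω, Q ω))
      = ent μ (fun t => ((x t.2.1 t.1, w t.2.2.1 t.1), t.2.2.2, t.1)) :=
    (ent_transfer p (fun ω => (Q ω, X' ω, W' ω, Y ω)) μ hμ (fun t => ((x t.2.1 t.1, w t.2.2.1 t.1), t.2.2.2, t.1))).symm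
  obtain ⟨k1, k2, k3⟩ := hk
  refine ⟨?_, ?_, ?_⟩
  · unfold mi condMI
    rw [tr1, tr2, tr3, tr4, tr5, tr6, tr7]
    exact k1
  · unfold mi condMI
    rw [tr1x, tr2x, tr3x, tr4x, tr5x, tr6x, tr7]
    exact k2
  · unfold mi condMI
    rw [tr8, tr9, tr10, tr11, tr12, tr7]
    exact k3
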